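/- Let G be an acyclic grade graph and let n be the cardinality of Nodes(G). Then for every k ≥ n + 1, G^k is the zero grade matrix, i.e., G^k(x,y) = 0 for all x, y ∈ V. -/

import Mathlib

open scoped Classical

/-- Weight of a path (nonempty list of vertices) in a grade graph. -/
def pathWeight {V R : Type*} [Semiring R] (G : V → V → R) : List V → R
  | [] => 1
  | [_] => 1
  | x :: y :: p => G x y * pathWeight G (y :: p)

/-- The set of non-source nodes of a grade graph. -/
def Nodes {V R : Type*} [Zero R] (G : V → V → R) : Set V := {y | ∃ x, G x y ≠ 0}

/-- Paths from `x` to `y`: nonempty lists with head `x` and last element `y`. -/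
def PathsBtw {V : Type*} (x y : V) : Set (List V) :=
  {p | p ≠ [] ∧ p.head? = some x ∧ p.getLast? = some y}

/-- A cycle: a path with more than one node and equal endpoints. -/
def IsCyclePath {V : Type*} (p : List V) : Prop := 1 < p.length ∧ p.head? = p.getLast?

/-- A grade graph is acyclic if every cycle has weight zero. -/
def Acyclic {V R : Type*} [Semiring R] (G : V → V → R) : Prop :=
  ∀ p : List V, IsCyclePath p → pathWeight G p = 0

/-- Reflexive and transitive closure of a grade graph:
`G*(x,y) = Σ_{p ∈ Paths(x,y)} w_G(p)`. -/
noncomputable def gstar {V R : Type*} [Semiring R] (G : V → V → R) (x y : V) : R :=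
  ∑ᶠ p ∈ PathsBtw x y, pathWeight G p

/-- Grade matrix multiplication. -/
noncomputable def matMul {V R : Type*} [Semiring R] (M₁ M₂ : V → V → R) (x y : V) : R :=
  ∑ᶠ z, M₁ x z * M₂ z y

/-- Identity grade matrix. -/
noncomputable def matId {V R : Type*} [Semiring R] (x y : V) : R := if x = y then 1 else 0

/-- `n`-fold product of a grade graph with itself, with `G⁰ = I`. -/
noncomputable def matPow {V R : Type*} [Semiring R] (G : V → V → R) : ℕ → V → V → R
  | 0 => matId
  | n + 1 => matMul G (matPow G n)

/-- Multiplication of a grade context by a grade matrix: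
`(γ·M)(x) = Σ_y γ(y)·M(y,x)`. -/
noncomputable def ctxMul {V R : Type*} [Semiring R] (γ : V → R) (M : V → V → R) (x : V) : R :=
  ∑ᶠ y, γ y * M y x

/-- A grade matrix: every row has finite support. -/
def RowFinite {V R : Type*} [Zero R] (M : V → V → R) : Prop :=
  ∀ x, {y | M x y ≠ 0}.Finite

/-!
If `G^k(x, y) ≠ 0`, expanding the product exhibits a path `x = x₀ x₁ ⋯ x_k` of nonzero weight.
Every `xᵢ` with `i ≥ 1` is the target of a nonzero edge, hence lies in `Nodes(G)`; for
`k > |Nodes(G)|` two of them coincide, so the path contains a cycle, whose weight is zero by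
acyclicity. Since the weight of a path factors through any of its vertices, the whole path has
weight zero.
-/

section PathWeight

variable {V R : Type*} [Semiring R] (G : V → V → R)

@[simp]
lemma pathWeight_cons_cons (x y : V) (p : List V) :
    pathWeight G (x :: y :: p) = G x y * pathWeight G (y :: p) := rfl

lemma pathWeight_append_cons (a : V) (p₁ p₂ : List V) :
    pathWeight G (p₁ ++ a :: p₂) = pathWeight G (p₁ ++ [a]) * pathWeight G (a :: p₂) := by
  induction p₁ with
  | nil => simp [pathWeight]
  | cons x t ih =>
    cases t with
    | nil => simp [pathWeight]
    | cons y t' =>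
      simp only [List.cons_append, pathWeight_cons_cons] at ih ⊢
      rw [ih, mul_assoc]

variable {G}

lemma Acyclic.pathWeight_cons_eq_zero_of_mem (hG : Acyclic G) {x : V} {t : List V}
    (hx : x ∈ t) : pathWeight G (x :: t) = 0 := by
  obtain ⟨s, u, rfl⟩ := List.append_of_mem hx
  have hcycle : IsCyclePath (x :: s ++ [x]) := ⟨by simp, by rw [List.getLast?_concat]; rfl⟩
  rw [← List.cons_append, pathWeight_append_cons, hG _ hcycle, zero_mul]

lemma Acyclic.pathWeight_eq_zero_of_not_nodup (hG : Acyclic G) {p : List V}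
    (hp : ¬ p.Nodup) : pathWeight G p = 0 := by
  induction p with
  | nil => exact absurd List.nodup_nil hp
  | cons x t ih =>
    rw [List.nodup_cons, not_and_or, not_not] at hp
    rcases hp with hx | ht
    · exact hG.pathWeight_cons_eq_zero_of_mem hx
    · cases t with
      | nil => exact absurd List.nodup_nil ht
      | cons y t' => rw [pathWeight_cons_cons, ih ht, mul_zero]

lemma mem_nodes_of_pathWeight_ne_zero {x : V} {t : List V} (hw : pathWeight G (x :: t) ≠ 0)
    {b : V} (hb : b ∈ t) : b ∈ Nodes G := by
  induction t generalizing x with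
  | nil => simp at hb
  | cons y t ih =>
    rw [pathWeight_cons_cons] at hw
    rcases List.mem_cons.mp hb with rfl | hb
    · exact ⟨x, left_ne_zero_of_mul hw⟩
    · exact ih (right_ne_zero_of_mul hw) hb

end PathWeight

section Support

variable {V R : Type*} [Semiring R] {G : V → V → R}

lemma nodes_finite (hG : {q : V × V | G q.1 q.2 ≠ 0}.Finite) : (Nodes G).Finite :=
  (hG.image Prod.snd).subset fun b ⟨a, hab⟩ => ⟨(a, b), hab, rfl⟩

lemma List.Nodup.length_le_ncard_nodes (hG : {q : V × V | G q.1 q.2 ≠ 0}.Finite) {x : V}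
    {t : List V} (ht : t.Nodup) (hw : pathWeight G (x :: t) ≠ 0) : t.length ≤ (Nodes G).ncard := by
  have hsub : (t.toFinset : Set V) ⊆ Nodes G := fun b hb =>
    mem_nodes_of_pathWeight_ne_zero hw (List.mem_toFinset.mp hb)
  calc t.length = (t.toFinset : Set V).ncard := by
        rw [Set.ncard_coe_finset, List.toFinset_card_of_nodup ht]
    _ ≤ (Nodes G).ncard := Set.ncard_le_ncard hsub (nodes_finite hG)

lemma row_support_finite (hG : {q : V × V | G q.1 q.2 ≠ 0}.Finite) (x : V) :
    {z | G x z ≠ 0}.Finite :=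
  hG.preimage (Prod.mk_right_injective x).injOn

/-- The left factor `r` is carried along because `R` may have zero divisors and need not be
commutative. -/
lemma exists_path_of_mul_matPow_ne_zero (hG : {q : V × V | G q.1 q.2 ≠ 0}.Finite) (k : ℕ) :
    ∀ (r : R) (x y : V), r * matPow G k x y ≠ 0 →
      ∃ p : List V, p.length = k + 1 ∧ p.head? = some x ∧ r * pathWeight G p ≠ 0 := by
  induction k with
  | zero =>
    intro r x y h
    refine ⟨[x], rfl, rfl, ?_⟩
    by_cases hxy : x = y
    · simpa [matPow, matId, hxy, pathWeight] using h
    · simp [matPow, matId, hxy] at h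
  | succ k ih =>
    intro r x y h
    have hsupp : (Function.support fun z => G x z * matPow G k z y).Finite :=
      (row_support_finite hG x).subset fun z hz h0 => hz (by simp only [h0, zero_mul])
    rw [matPow, matMul, mul_finsum' _ _ hsupp] at h
    obtain ⟨z, hz⟩ : ∃ z, r * G x z * matPow G k z y ≠ 0 := by
      by_contra! hall
      exact h (finsum_eq_zero_of_forall_eq_zero fun z => by rw [← mul_assoc, hall z])
    obtain ⟨_ | ⟨w, t⟩, hlen, hhead, hw⟩ := ih _ z y hz
    · simp at hlen
    · obtain rfl : w = z := by simpa using hhead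
      exact ⟨x :: w :: t, by simpa using hlen, rfl, by rwa [pathWeight_cons_cons, ← mul_assoc]⟩

end Support

theorem matPow_eq_zero_of_large_general {V R : Type*} [Semiring R]
    (G : V → V → R) (hG : {q : V × V | G q.1 q.2 ≠ 0}.Finite)
    (hacyc : Acyclic G) :
    ∀ k : ℕ, (Nodes G).ncard + 1 ≤ k → ∀ x y : V, matPow G k x y = 0 := by
  intro k hk x y
  by_contra hne
  obtain ⟨_ | ⟨x₀, t⟩, hlen, -, hw⟩ :=
    exists_path_of_mul_matPow_ne_zero hG k 1 x y (by rwa [one_mul])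
  · simp at hlen
  rw [one_mul] at hw
  have ht : ¬ t.Nodup := fun hnd => by
    have hcard := hnd.length_le_ncard_nodes hG hw
    simp only [List.length_cons, Nat.add_right_cancel_iff] at hlen
    omega
  exact hw (hacyc.pathWeight_eq_zero_of_not_nodup fun hp => ht (List.nodup_cons.mp hp).2)

/-- For an acyclic grade graph `G` with `n = |Nodes(G)|`, for every `k ≥ n + 1`
the power `G^k` is the zero grade matrix. -/
theorem matPow_eq_zero_of_large {V R : Type*} [Semiring R] [PartialOrder R]
    (hadd : ∀ a b c d : R, a ≤ b → c ≤ d → a + c ≤ b + d)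
    (hmul : ∀ a b c d : R, a ≤ b → c ≤ d → a * c ≤ b * d)
    (hzero : ∀ r : R, r ≤ 0 → r = 0)
    (G : V → V → R) (hG : {q : V × V | G q.1 q.2 ≠ 0}.Finite)
    (hacyc : Acyclic G) :
    ∀ k : ℕ, (Nodes G).ncard + 1 ≤ k → ∀ x y : V, matPow G k x y = 0 :=
  matPow_eq_zero_of_large_general G hG hacyc
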